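/- There exists a constant c > 0 such that for every sufficiently large integer n there is a finite simple graph G on n vertices with local boxicity lbox(G) ≥ c · n / log₂ n. -/

import Mathlib

open Classical

/-- A finite simple graph is an interval graph if each vertex can be assigned a
closed real interval so that distinct vertices are adjacent iff their intervals
intersect. -/
def IsIntervalGraph {V : Type} (I : SimpleGraph V) : Prop :=
  ∃ l r : V → ℝ, ∀ u v : V, u ≠ v →
    (I.Adj u v ↔ (Set.Icc (l u) (r u) ∩ Set.Icc (l v) (r v)).Nonempty)

/-- A vertex is universal if it is adjacent to every other vertex. -/
def IsUniversal {V : Type} (I : SimpleGraph V) (v : V) : Prop :=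
  ∀ u : V, u ≠ v → I.Adj v u

/-- `G` has a local box representation where every vertex is non-universal in at
most `t` of the interval graphs. -/
def LocalBoxRep {V : Type} (G : SimpleGraph V) (t : ℕ) : Prop :=
  ∃ (k : ℕ) (I : Fin k → SimpleGraph V),
    (∀ i, IsIntervalGraph (I i)) ∧
    (∀ u v : V, u ≠ v → (G.Adj u v ↔ ∀ i, (I i).Adj u v)) ∧
    (∀ v : V, {i : Fin k | ¬ IsUniversal (I i) v}.ncard ≤ t)

/-- Local boxicity of a graph. -/
noncomputable def lbox {V : Type} (G : SimpleGraph V) : ℕ :=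
  sInf {t : ℕ | LocalBoxRep G t}

/-- Iterated base-2 logarithm: the number of times `logb 2` must be applied
before the result becomes at most 1. -/
noncomputable def logStar (x : ℝ) : ℕ :=
  sInf {n : ℕ | (Real.logb 2)^[n] x ≤ 1}

/-- A graph is claw-free if it has no induced `K_{1,3}`. -/
def ClawFree {V : Type} (G : SimpleGraph V) : Prop :=
  ∀ v a b c : V, a ≠ b → a ≠ c → b ≠ c →
    ¬ (G.Adj v a ∧ G.Adj v b ∧ G.Adj v c ∧ ¬ G.Adj a b ∧ ¬ G.Adj a c ∧ ¬ G.Adj b c)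

/-- Comparability graph of a poset. -/
def compGraph (α : Type) [PartialOrder α] : SimpleGraph α where
  Adj x y := x ≠ y ∧ (x ≤ y ∨ y ≤ x)
  symm := by
    refine ⟨?_⟩
    intro x y h
    exact ⟨h.1.symm, h.2.symm⟩
  loopless := by
    refine ⟨?_⟩
    intro x h
    exact h.1 rfl

/-- A partial linear extension of a poset, given as a duplicate-free list
(ordered by position) which extends the partial order on its elements. -/
def IsPLE {α : Type} [PartialOrder α] [DecidableEq α] (L : List α) : Prop :=
  L.Nodup ∧ ∀ x ∈ L, ∀ y ∈ L, x ≤ y → L.idxOf x ≤ L.idxOf y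

/-- `x` appears below `y` in the list `L`. -/
def Below {α : Type} [DecidableEq α] (L : List α) (x y : α) : Prop :=
  x ∈ L ∧ y ∈ L ∧ L.idxOf x < L.idxOf y

/-- A local realizer of a poset: a family of ple's such that every strict
relation is witnessed, and every incomparable pair is reversed twice. -/
def IsLocalRealizer {α : Type} [PartialOrder α] [DecidableEq α] {k : ℕ}
    (L : Fin k → List α) : Prop :=
  (∀ i, IsPLE (L i)) ∧
  (∀ x y : α, x < y → ∃ i, Below (L i) x y) ∧
  (∀ x y : α, ¬ x ≤ y → ¬ y ≤ x →
    (∃ i, Below (L i) x y) ∧ (∃ i, Below (L i) y x))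

/-- Local dimension of a poset: the least `t` such that some local realizer has
every element in at most `t` ple's. -/
noncomputable def ldim (α : Type) [PartialOrder α] [DecidableEq α] : ℕ :=
  sInf {t : ℕ | ∃ (k : ℕ) (L : Fin k → List α), IsLocalRealizer L ∧
    ∀ x : α, {i : Fin k | x ∈ L i}.ncard ≤ t}

/-- Product dimension of a graph. -/
noncomputable def prodDim {V : Type} (G : SimpleGraph V) : ℕ :=
  sInf {k : ℕ | 0 < k ∧ ∃ f : V → Fin k → ℕ,
    ∀ u v : V, u ≠ v → (G.Adj u v ↔ ∀ i, f u i ≠ f v i)}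

/-- A poset has height at most 2: every chain has at most 2 elements. -/
def HeightAtMostTwo (α : Type) [Preorder α] : Prop :=
  ∀ x y z : α, x ≤ y → y ≤ z → x = y ∨ y = z

/-!
A counting argument. In a local box representation of a graph on `n` vertices in which every
vertex is non-universal in at most `t` interval graphs, the interval graphs in which all vertices
are universal can be ignored, so at most `t * n` of them matter, and each may be assumed to have
integer endpoints below `2 * n`. Two vertices are adjacent iff their intervals meet in every
factor where both are non-universal, so the graph is determined by recording, for each vertex, at
most `t` triples (factor, left endpoint, right endpoint). This gives at most `n ^ (6 * t * n)`
graphs with `lbox ≤ t`, fewer than the `2 ^ (n choose 2)` graphs on `n` labelled vertices once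
`t ≤ n / (32 log₂ n)`.
-/

def IntervalsMeet {α : Type*} [LE α] (p q : α × α) : Prop :=
  p.1 ≤ p.2 ∧ q.1 ≤ q.2 ∧ p.1 ≤ q.2 ∧ q.1 ≤ p.2

theorem Set.Icc_inter_Icc_nonempty_iff {α : Type*} [LinearOrder α] {a b c d : α} :
    (Set.Icc a b ∩ Set.Icc c d).Nonempty ↔ IntervalsMeet (a, b) (c, d) := by
  simp only [Set.Icc_inter_Icc, Set.nonempty_Icc, sup_le_iff, le_inf_iff, IntervalsMeet]
  tauto

theorem OrderEmbedding.intervalsMeet_map_iff {α β : Type*} [Preorder α] [Preorder β]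
    (f : α ↪o β) {p q : α × α} :
    IntervalsMeet (Prod.map f f p) (Prod.map f f q) ↔ IntervalsMeet p q := by
  simp [IntervalsMeet]

theorem IsIntervalGraph.exists_fin_endpoints {V : Type} [Fintype V] {I : SimpleGraph V}
    (h : IsIntervalGraph I) :
    ∃ l r : V → Fin (2 * Fintype.card V), ∀ u v, u ≠ v →
      (I.Adj u v ↔ IntervalsMeet (l u, r u) (l v, r v)) := by
  obtain ⟨l, r, hlr⟩ := h
  set A : Finset ℝ := Finset.univ.image l ∪ Finset.univ.image r
  have hA : A.card ≤ 2 * Fintype.card V :=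
    (Finset.card_union_le _ _).trans (by
      rw [two_mul]; exact add_le_add Finset.card_image_le Finset.card_image_le)
  let f : A ↪o Fin (2 * Fintype.card V) :=
    (A.orderIsoOfFin rfl).symm.toOrderEmbedding.trans (Fin.castLEOrderEmb hA)
  have hl : ∀ v, l v ∈ A := fun v => by simp [A]
  have hr : ∀ v, r v ∈ A := fun v => by simp [A]
  refine ⟨fun v => f ⟨l v, hl v⟩, fun v => f ⟨r v, hr v⟩, fun u v huv => ?_⟩
  rw [hlr u v huv, Set.Icc_inter_Icc_nonempty_iff]
  exact (f.intervalsMeet_map_iff (p := (⟨l u, hl u⟩, ⟨r u, hr u⟩))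
    (q := (⟨l v, hl v⟩, ⟨r v, hr v⟩))).symm

theorem isIntervalGraph_top_deleteEdges {V : Type} {a b : V} (hab : a ≠ b) :
    IsIntervalGraph ((⊤ : SimpleGraph V).deleteEdges {s(a, b)}) := by
  refine ⟨fun x => if x = b then 1 else 0, fun x => if x = a then 0 else 1, fun u v huv => ?_⟩
  rw [Set.Icc_inter_Icc_nonempty_iff]
  simp only [SimpleGraph.deleteEdges_adj, SimpleGraph.top_adj, Set.mem_singleton_iff,
    Sym2.eq, Sym2.rel_iff', Prod.mk.injEq, Prod.swap_prod_mk, IntervalsMeet]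
  by_cases hua : u = a <;> by_cases hub : u = b <;> by_cases hva : v = a <;> by_cases hvb : v = b <;>
    simp_all

theorem LocalBoxRep.mono {V : Type} {G : SimpleGraph V} {s t : ℕ} (h : LocalBoxRep G s)
    (hst : s ≤ t) : LocalBoxRep G t := by
  obtain ⟨k, I, hI, hadj, hnu⟩ := h
  exact ⟨k, I, hI, hadj, fun v => (hnu v).trans hst⟩

theorem exists_localBoxRep {V : Type} [Finite V] (G : SimpleGraph V) : ∃ t, LocalBoxRep G t := by
  let e := Finite.equivFin {p : V × V // Gᶜ.Adj p.1 p.2}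
  refine ⟨Nat.card {p : V × V // Gᶜ.Adj p.1 p.2}, _,
    fun i => (⊤ : SimpleGraph V).deleteEdges {s((e.symm i).1.1, (e.symm i).1.2)},
    fun i => isIntervalGraph_top_deleteEdges (e.symm i).2.1, fun u v huv => ?_,
    fun v => (Set.ncard_le_ncard (Set.subset_univ _)).trans_eq (by simp)⟩
  simp only [SimpleGraph.deleteEdges_adj, SimpleGraph.top_adj, Set.mem_singleton_iff, ne_eq, huv,
    not_false_eq_true, true_and]
  constructor
  · intro h i hi
    have := (e.symm i).2.2
    rw [Sym2.eq_iff] at hi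
    rcases hi with ⟨rfl, rfl⟩ | ⟨rfl, rfl⟩
    · exact this h
    · exact this h.symm
  · intro h
    by_contra hG
    exact h (e ⟨(u, v), huv, hG⟩) (by simp)

-- `lbox` is an `sInf`, which is `0` on the empty set: this is where `exists_localBoxRep` is needed.
theorem lt_lbox_of_not_localBoxRep {V : Type} [Finite V] {G : SimpleGraph V} {t : ℕ}
    (h : ¬ LocalBoxRep G t) : t < lbox G := by
  by_contra! hle
  exact h (LocalBoxRep.mono (Nat.sInf_mem (exists_localBoxRep G)) hle)

theorem forall_adj_iff_forall_adj_of_not_isUniversal {V ι : Type} {I : ι → SimpleGraph V}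
    {u v : V} (huv : u ≠ v) :
    (∀ i, (I i).Adj u v) ↔ ∀ i, ¬ IsUniversal (I i) u → ¬ IsUniversal (I i) v → (I i).Adj u v := by
  refine forall_congr' fun i => ⟨fun h _ _ => h, fun h => ?_⟩
  by_cases hu : IsUniversal (I i) u
  · exact hu v huv.symm
  by_cases hv : IsUniversal (I i) v
  · exact (hv u huv).symm
  exact h hu hv

def CodesCompatible {ι α : Type*} [LE α] (A B : Finset (ι × α × α)) : Prop :=
  ∀ p ∈ A, ∀ q ∈ B, p.1 = q.1 → IntervalsMeet p.2 q.2

theorem LocalBoxRep.exists_code {V : Type} [Fintype V] {G : SimpleGraph V} {t : ℕ}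
    (h : LocalBoxRep G t) :
    ∃ c : V → Finset (Fin (t * Fintype.card V) × Fin (2 * Fintype.card V) ×
        Fin (2 * Fintype.card V)),
      (∀ v, (c v).card ≤ t) ∧ ∀ u v, u ≠ v → (G.Adj u v ↔ CodesCompatible (c u) (c v)) := by
  obtain ⟨k, I, hI, hadj, hnu⟩ := h
  choose l r hlr using fun i => (hI i).exists_fin_endpoints
  let N (v : V) : Finset (Fin k) := {i | ¬ IsUniversal (I i) v}
  have hN : ∀ v, (N v).card ≤ t := fun v => by
    simpa [N, ← Set.ncard_coe_finset] using hnu v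
  have hNU : ∀ v, N v ⊆ Finset.univ.biUnion N := fun v =>
    Finset.subset_biUnion_of_mem N (Finset.mem_univ v)
  have hU : (Finset.univ.biUnion N).card ≤ t * Fintype.card V := calc
    _ ≤ ∑ v, (N v).card := Finset.card_biUnion_le
    _ ≤ ∑ _v : V, t := Finset.sum_le_sum fun v _ => hN v
    _ = t * Fintype.card V := by simp [mul_comm]
  obtain ⟨φ⟩ : Nonempty (Finset.univ.biUnion N ↪ Fin (t * Fintype.card V)) :=
    Function.Embedding.nonempty_of_card_le (by rwa [Fintype.card_coe, Fintype.card_fin])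
  refine ⟨fun v => (N v).attach.image fun i : N v => (φ ⟨i, hNU v i.2⟩, l i v, r i v),
    fun v => Finset.card_image_le.trans (by simpa using hN v), fun u v huv => ?_⟩
  rw [hadj u v huv, forall_adj_iff_forall_adj_of_not_isUniversal huv]
  have hN_iff : ∀ i w, i ∈ N w ↔ ¬ IsUniversal (I i) w := by simp [N]
  simp only [CodesCompatible, Finset.mem_image, Finset.mem_attach, true_and]
  constructor
  · rintro h _ ⟨i, rfl⟩ _ ⟨j, rfl⟩ hij
    obtain ⟨j, hj⟩ := j
    obtain rfl : i.1 = j := congrArg Subtype.val (φ.injective hij)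
    exact (hlr _ u v huv).1 (h _ ((hN_iff _ _).1 i.2) ((hN_iff _ _).1 hj))
  · intro h i hu hv
    exact (hlr i u v huv).2
      (h _ ⟨⟨i, (hN_iff i u).2 hu⟩, rfl⟩ _ ⟨⟨i, (hN_iff i v).2 hv⟩, rfl⟩ rfl)

theorem Fintype.card_subtype_finset_card_le (X : Type*) [Fintype X] (t : ℕ) :
    Fintype.card {s : Finset X // s.card ≤ t} ≤ (Fintype.card X + 1) ^ t := by
  let F (f : Fin t → Option X) : {s : Finset X // s.card ≤ t} :=
    ⟨Finset.univ.biUnion fun j => (f j).toFinset, by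
      simpa using Finset.card_biUnion_le_card_mul Finset.univ (fun j => (f j).toFinset) 1
        fun j _ => by cases f j <;> simp⟩
  have hF : Function.Surjective F := by
    rintro ⟨s, hs⟩
    refine ⟨fun j => s.toList[(j : ℕ)]?, Subtype.ext (Finset.ext fun x => ?_)⟩
    simp only [F, Finset.mem_biUnion, Finset.mem_univ, true_and, Option.mem_toFinset,
      Option.mem_def]
    rw [← Finset.mem_toList, List.mem_iff_getElem?]
    constructor
    · exact fun ⟨j, hj⟩ => ⟨j, hj⟩
    · rintro ⟨j, hj⟩
      have : j < t := (List.getElem?_eq_some_iff.1 hj).1.trans_le (by simpa using hs)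
      exact ⟨⟨j, this⟩, hj⟩
  simpa using Fintype.card_le_of_surjective F hF

theorem SimpleGraph.card_le_of_forall_exists_code {V C : Type*} [Fintype V] [Fintype C]
    (R : C → C → Prop)
    (h : ∀ G : SimpleGraph V, ∃ c : V → C, ∀ u v, u ≠ v → (G.Adj u v ↔ R (c u) (c v))) :
    Fintype.card (SimpleGraph V) ≤ Fintype.card C ^ Fintype.card V := by
  choose c hc using h
  have hinj : Function.Injective c := fun G H hGH => by
    ext u v
    by_cases huv : u = v
    · simp [huv]
    · rw [hc G u v huv, hc H u v huv, hGH]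
  simpa using Fintype.card_le_of_injective c hinj

theorem SimpleGraph.two_pow_choose_two_le_card (V : Type*) [Fintype V] :
    2 ^ (Fintype.card V).choose 2 ≤ Fintype.card (SimpleGraph V) := by
  let F (s : Set {e : Sym2 V // ¬ e.IsDiag}) : SimpleGraph V :=
    SimpleGraph.fromEdgeSet (Subtype.val '' s)
  have hinj : Function.Injective F := fun s s' hss' => by
    have hmem : ∀ s x, x.1 ∈ (F s).edgeSet ↔ x ∈ s := fun s x => by
      simp [F, x.2, Subtype.val_injective.mem_set_image]
    ext x
    rw [← hmem, hss', hmem]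
  have := Fintype.card_le_of_injective F hinj
  rwa [Fintype.card_set, Sym2.card_subtype_not_diag] at this

theorem exists_not_localBoxRep (V : Type) [Fintype V] (t : ℕ)
    (h : ((t * Fintype.card V * (2 * Fintype.card V) ^ 2 + 1) ^ t) ^ Fintype.card V <
      2 ^ (Fintype.card V).choose 2) :
    ∃ G : SimpleGraph V, ¬ LocalBoxRep G t := by
  by_contra! hall
  have hcard := SimpleGraph.card_le_of_forall_exists_code
    (fun A B : {s : Finset (Fin (t * Fintype.card V) × Fin (2 * Fintype.card V) ×
      Fin (2 * Fintype.card V)) // s.card ≤ t} => CodesCompatible A.1 B.1)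
    fun G => by
      obtain ⟨c, hc, hadj⟩ := (hall G).exists_code
      exact ⟨fun v => ⟨c v, hc v⟩, hadj⟩
  refine (h.trans_le (SimpleGraph.two_pow_choose_two_le_card V)).not_ge (hcard.trans ?_)
  gcongr
  simpa [pow_two, mul_assoc] using Fintype.card_subtype_finset_card_le
    (Fin (t * Fintype.card V) × Fin (2 * Fintype.card V) × Fin (2 * Fintype.card V)) t

theorem Nat.pow_lt_two_pow_of_mul_logb_lt {n k m : ℕ} (hn : 0 < n)
    (h : k * Real.logb 2 n < m) : n ^ k < 2 ^ m := by
  have : ((n ^ k : ℕ) : ℝ) < (2 : ℝ) ^ (m : ℝ) := by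
    rw [← Real.logb_lt_iff_lt_rpow one_lt_two (by positivity)]
    push_cast
    rwa [Real.logb_pow]
  exact_mod_cast this

theorem local_code_count_lt_two_pow_choose_two {n t : ℕ} (hn : 3 ≤ n)
    (ht : (t : ℝ) * Real.logb 2 n ≤ 1 / 32 * n) :
    ((t * n * (2 * n) ^ 2 + 1) ^ t) ^ n < 2 ^ n.choose 2 := by
  have hn' : (3 : ℝ) ≤ n := by exact_mod_cast hn
  have hlog : 1 ≤ Real.logb 2 n := by
    rw [Real.le_logb_iff_rpow_le one_lt_two (by positivity)]
    norm_num
    linarith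
  have htn : t ≤ n := by
    have : (t : ℝ) ≤ n := by nlinarith
    exact_mod_cast this
  have hbase : t * n * (2 * n) ^ 2 + 1 ≤ n ^ 6 := by
    have : t * n * (2 * n) ^ 2 ≤ 4 * n ^ 4 := by
      calc t * n * (2 * n) ^ 2 ≤ n * n * (2 * n) ^ 2 := by gcongr
        _ = 4 * n ^ 4 := by ring
    have : 9 * n ^ 4 ≤ n ^ 6 := by
      calc 9 * n ^ 4 ≤ n ^ 2 * n ^ 4 := by gcongr; nlinarith
        _ = n ^ 6 := by ring
    have : 1 ≤ n ^ 4 := Nat.one_le_pow _ _ (by omega)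
    omega
  calc ((t * n * (2 * n) ^ 2 + 1) ^ t) ^ n ≤ ((n ^ 6) ^ t) ^ n := by gcongr
    _ = n ^ (6 * t * n) := by ring
    _ < 2 ^ n.choose 2 := Nat.pow_lt_two_pow_of_mul_logb_lt (by omega) <| by
      rw [Nat.cast_choose_two]
      push_cast
      nlinarith

/-- ∃ c > 0 such that for every sufficiently large n there is a
graph on n vertices with lbox ≥ c·n/log₂ n. -/
theorem stmt10 : ∃ c : ℝ, 0 < c ∧ ∃ n₀ : ℕ, ∀ n : ℕ, n₀ ≤ n →
    ∃ (V : Type) (_ : Fintype V) (G : SimpleGraph V),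
      Fintype.card V = n ∧
      c * (n : ℝ) / Real.logb 2 (n : ℝ) ≤ (lbox G : ℝ) := by
  refine ⟨1 / 32, by norm_num, 3, fun n hn => ?_⟩
  have hlog : 0 < Real.logb 2 n :=
    Real.logb_pos one_lt_two (by exact_mod_cast (show 1 < n by omega))
  set x : ℝ := 1 / 32 * n / Real.logb 2 n
  have htx : (⌊x⌋₊ : ℝ) * Real.logb 2 n ≤ 1 / 32 * n :=
    (le_div_iff₀ hlog).1 (Nat.floor_le (by positivity))
  obtain ⟨G, hG⟩ := exists_not_localBoxRep (Fin n) ⌊x⌋₊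
    (by simpa using local_code_count_lt_two_pow_choose_two hn htx)
  refine ⟨Fin n, inferInstance, G, Fintype.card_fin n, ?_⟩
  exact (Nat.lt_floor_add_one x).le.trans (by exact_mod_cast lt_lbox_of_not_localBoxRep hG)
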